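/- For every integer k ≥ 1 and every i with 1 ≤ i ≤ 2^k − 1, the identity [y_0, y_(2^k − i)]^(−1) = [y_0, y_i] holds in G_k. -/

import Mathlib

/-!
Since `x^(2^k)` commutes with `y`, the conjugates `y_j` are periodic in `j` with period `2^k`, so
`y_(2^k − i) = y_(−i)`. Conjugation by `x^i` shifts indices down by `i`, hence carries
`[y_i, y_0] = [y_0, y_i]⁻¹` to `[y_0, y_(−i)]`. For `i ≤ 2^(k-1)` the relations make
`[y_0, y_i]` commute with `x`, so this conjugation is trivial; for larger `i` apply this to
`2^k − i`.
-/

open Subgroup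

namespace P2G

/-- The commutator `[a,b] = a⁻¹ b⁻¹ a b` (left-normed convention of the paper). -/
def comm {M : Type*} [Group M] (a b : M) : M := a⁻¹ * b⁻¹ * a * b

def X : FreeGroup (Fin 2) := FreeGroup.of 0
def Y : FreeGroup (Fin 2) := FreeGroup.of 1

/-- `y_j = x^(-j) y x^j` in the free group. -/
def yF (j : ℤ) : FreeGroup (Fin 2) := X ^ (-j) * Y * X ^ j

/-- Relations for `G_k`:
`x^(2^(k+1)) = y^4 = [x^(2^k), y] = [y^2, x] = 1` and
`[y_0,y_i]^2 = [y_0,y_i,x] = [y_0,y_i,y] = 1` for `1 ≤ i ≤ 2^(k-1)`. -/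
def rels (k : ℕ) : Set (FreeGroup (Fin 2)) :=
  {X ^ 2 ^ (k + 1), Y ^ 4, comm (X ^ 2 ^ k) Y, comm (Y ^ 2) X} ∪
    ⋃ i ∈ Set.Icc 1 (2 ^ (k - 1)),
      {comm (yF 0) (yF i) ^ 2, comm (comm (yF 0) (yF i)) X, comm (comm (yF 0) (yF i)) Y}

/-- The group `G_k`, given by the above presentation. -/
abbrev G (k : ℕ) := PresentedGroup (rels k)

/-- The generator `x` of `G_k`. -/
def x (k : ℕ) : G k := PresentedGroup.of 0

/-- The generator `y` of `G_k`. -/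
def y (k : ℕ) : G k := PresentedGroup.of 1

/-- `y_j = x^(-j) y x^j` in `G_k`. -/
def yg (k : ℕ) (j : ℤ) : G k := x k ^ (-j) * y k * x k ^ j

/-- `H_k`, the normal closure of `y` in `G_k`. -/
def Hsub (k : ℕ) : Subgroup (G k) := Subgroup.normalClosure {y k}

/-- `Z_k`, the normal closure in `G_k` of `{x^(2^k), y^2} ∪ {[y_0,y_i] : 1 ≤ i ≤ 2^(k-1)}`. -/
def Zsub (k : ℕ) : Subgroup (G k) :=
  Subgroup.normalClosure ({x k ^ 2 ^ k, y k ^ 2} ∪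
    {g | ∃ i : ℕ, 1 ≤ i ∧ i ≤ 2 ^ (k - 1) ∧ g = comm (yg k 0) (yg k i)})

/-- `G_k^(2^j)`, the subgroup generated by all `2^j`-th powers of elements of `G_k`. -/
def pow2 (k j : ℕ) : Subgroup (G k) := Subgroup.closure (Set.range fun g : G k => g ^ 2 ^ j)

/-- `w = y_(2^k − 1) y_(2^k − 2) ⋯ y_1 y_0` in `G_k`. -/
def w (k : ℕ) : G k := (((List.range (2 ^ k)).reverse).map fun j => yg k j).prod

/-- The left-normed commutator `c k i = [y, x, …(i copies of x)…, x]`; `c k 0 = y`. -/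
def c (k : ℕ) : ℕ → G k
  | 0 => y k
  | i + 1 => comm (c k i) (x k)

/-- `γ_m(G_k)`, the `m`-th term of the lower central series (`γ_1 = G_k`). -/
abbrev gamma (k m : ℕ) : Subgroup (G k) := (⊤ : Subgroup (G k)).lowerCentralSeries (m - 1)

section Commutator

variable {M : Type*} [Group M]

lemma comm_eq_one_iff_commute {a b : M} : comm a b = 1 ↔ Commute a b := by
  rw [comm, show a⁻¹ * b⁻¹ * a * b = (b * a)⁻¹ * (a * b) by group, inv_mul_eq_one, eq_comm]
  rfl

lemma comm_inv (a b : M) : (comm a b)⁻¹ = comm b a := by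
  simp only [comm]
  group

lemma map_comm {N F : Type*} [Group N] [FunLike F M N] [MonoidHomClass F M N] (f : F) (a b : M) :
    f (comm a b) = comm (f a) (f b) := by
  simp only [comm, map_mul, map_inv]

end Commutator

section Relations

variable (k : ℕ)

lemma mk_X : PresentedGroup.mk (rels k) X = x k := rfl

lemma mk_Y : PresentedGroup.mk (rels k) Y = y k := rfl

lemma mk_yF (j : ℤ) : PresentedGroup.mk (rels k) (yF j) = yg k j := by
  simp only [yF, yg, map_mul, map_zpow, mk_X, mk_Y]

lemma commute_x_pow_two_pow_y : Commute (x k ^ 2 ^ k) (y k) := by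
  have hrel : comm (X ^ 2 ^ k) Y ∈ rels k := by simp [rels]
  simpa only [map_comm, map_pow, mk_X, mk_Y, comm_eq_one_iff_commute] using
    PresentedGroup.one_of_mem hrel

lemma commute_comm_yg_x {n : ℤ} (hn1 : 1 ≤ n) (hn2 : n ≤ 2 ^ (k - 1)) :
    Commute (comm (yg k 0) (yg k n)) (x k) := by
  have hrel : comm (comm (yF 0) (yF n)) X ∈ rels k :=
    Set.mem_union_right _ <| Set.mem_biUnion (Set.mem_Icc.mpr ⟨hn1, hn2⟩) (by simp)
  simpa only [map_comm, mk_X, mk_yF, comm_eq_one_iff_commute] using PresentedGroup.one_of_mem hrel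

lemma yg_add_two_pow (j : ℤ) : yg k (j + 2 ^ k) = yg k j := by
  have hcomm : Commute (x k ^ (2 ^ k : ℤ)) (y k) := by
    exact_mod_cast commute_x_pow_two_pow_y k
  have hy : x k ^ (-(2 ^ k : ℤ)) * y k * x k ^ (2 ^ k : ℤ) = y k := by
    rw [zpow_neg, mul_assoc, ← hcomm.eq, inv_mul_cancel_left]
  calc yg k (j + 2 ^ k)
      = x k ^ (-j) * (x k ^ (-(2 ^ k : ℤ)) * y k * x k ^ (2 ^ k : ℤ)) * x k ^ j := by
        simp only [yg, neg_add, zpow_add]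
        group
    _ = yg k j := by rw [hy, yg]

lemma conj_x_zpow_yg (i j : ℤ) : MulAut.conj (x k ^ i) (yg k j) = yg k (j - i) := by
  simp only [MulAut.conj_apply, yg, ← zpow_neg, mul_assoc, ← zpow_add, sub_eq_add_neg]
  group

end Relations

lemma inv_comm_yg_zero_two_pow_sub (k : ℕ) {i : ℤ} (h1 : 1 ≤ i) (h2 : i ≤ 2 ^ (k - 1)) :
    (comm (yg k 0) (yg k (2 ^ k - i)))⁻¹ = comm (yg k 0) (yg k i) := by
  have hcomm : Commute (comm (yg k 0) (yg k i)) (x k ^ i) :=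
    (commute_comm_yg_x k h1 h2).zpow_right i
  have h0 : yg k 0 = MulAut.conj (x k ^ i) (yg k i) := by rw [conj_x_zpow_yg, sub_self]
  have hshift : yg k (2 ^ k - i) = MulAut.conj (x k ^ i) (yg k 0) := by
    rw [conj_x_zpow_yg, ← yg_add_two_pow k (0 - i)]
    ring_nf
  calc (comm (yg k 0) (yg k (2 ^ k - i)))⁻¹
      = (comm (MulAut.conj (x k ^ i) (yg k i)) (MulAut.conj (x k ^ i) (yg k 0)))⁻¹ := by
        rw [hshift, ← h0]
    _ = MulAut.conj (x k ^ i) (comm (yg k 0) (yg k i)) := by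
        rw [← map_comm, ← map_inv, comm_inv]
    _ = comm (yg k 0) (yg k i) := by rw [MulAut.conj_apply, ← hcomm.eq, mul_inv_cancel_right]

theorem stmt3_general (k : ℕ) (i : ℤ) (h1 : 1 ≤ i) (h2 : i ≤ 2 ^ k - 1) :
    (comm (yg k 0) (yg k (2 ^ k - i)))⁻¹ = comm (yg k 0) (yg k i) := by
  have hhalf : (2 : ℤ) ^ k ≤ 2 * 2 ^ (k - 1) := by
    rw [← pow_succ']
    exact pow_le_pow_right₀ one_le_two (by omega)
  rcases le_or_gt i (2 ^ (k - 1)) with hsmall | hlarge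
  · exact inv_comm_yg_zero_two_pow_sub k h1 hsmall
  · have h := inv_comm_yg_zero_two_pow_sub k (i := 2 ^ k - i) (by omega) (by omega)
    rw [sub_sub_cancel] at h
    rw [← h, inv_inv]

/-- For every `k ≥ 1` and every `i` with `1 ≤ i ≤ 2^k − 1`, the identity
`[y_0, y_(2^k − i)]⁻¹ = [y_0, y_i]` holds in `G_k`. -/
theorem stmt3 (k : ℕ) (hk : 1 ≤ k) (i : ℤ) (h1 : 1 ≤ i) (h2 : i ≤ 2 ^ k - 1) :
    (comm (yg k 0) (yg k (2 ^ k - i)))⁻¹ = comm (yg k 0) (yg k i) :=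
  stmt3_general k i h1 h2

end P2G
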